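/- Let n be a positive integer, H a complex Hilbert space, Σ ⊆ 𝔽ₙ⁺ a nonempty admissible set, and L : Σ → B(H). Then there exists a row contraction (T₁,…,Tₙ) on H such that T_σ L(g₀) = L(σ) for every σ ∈ Σ — equivalently, L is a moment map for Poisson transforms on the Cuntz–Toeplitz algebra C*(S₁,…,Sₙ) — if and only if K₁ ≤ K₂. -/

import Mathlib

/-!
Statement 0: operator-valued moment problem for Poisson transforms on the
Cuntz–Toeplitz algebra, stated in the equivalent row-contraction form.
-/

open scoped InnerProductSpace ComplexOrder ComplexInnerProductSpace Classical
open ContinuousLinearMap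

noncomputable section

/-- Words in the free monoid `𝔽ₙ⁺` on `n` generators (the empty word is `g₀`). -/
abbrev Wd (n : ℕ) := List (Fin n)

/-- A set `Σ ⊆ 𝔽ₙ⁺` is admissible if `αβ ∈ Σ` implies `β ∈ Σ`. -/
def Adm {n : ℕ} (S : Set (Wd n)) : Prop := ∀ α β : Wd n, α ++ β ∈ S → β ∈ S

/-- `σ ≤ α` : `σ` is a prefix of `α`, i.e. `α = στ` for some `τ`. -/
def pfx {n : ℕ} (σ α : Wd n) : Prop := ∃ τ : Wd n, α = σ ++ τ

/-- `α ∖ σ` : the unique `τ` with `α = στ` when `σ ≤ α`. -/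
def wq {n : ℕ} (α σ : Wd n) : Wd n := α.drop σ.length

variable {H : Type*} [NormedAddCommGroup H] [InnerProductSpace ℂ H] [CompleteSpace H]

/-- `T_α = T_{i₁} ⋯ T_{i_k}` for a word `α = g_{i₁} ⋯ g_{i_k}`, `T_{g₀} = I`. -/
def wordOp {n : ℕ} (T : Fin n → (H →L[ℂ] H)) (α : Wd n) : H →L[ℂ] H := (α.map T).prod

/-- `(T₁, …, Tₙ)` is a row contraction: `T₁T₁* + ⋯ + TₙTₙ* ≤ I`. -/
def RowContraction {n : ℕ} (T : Fin n → (H →L[ℂ] H)) : Prop :=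
  ((1 : H →L[ℂ] H) - ∑ i, T i * adjoint (T i)).IsPositive

/-- An operator-valued kernel `K` on `X` is positive semidefinite if
`∑_{x,y} ⟨K(x,y) h(y), h(x)⟩ ≥ 0` for all finitely supported `h : X → H`. -/
def KerPSD {X : Type*} (K : X → X → (H →L[ℂ] H)) : Prop :=
  ∀ (s : Finset X) (h : X → H), 0 ≤ ∑ x ∈ s, ∑ y ∈ s, ⟪h x, (K x y) (h y)⟫_ℂ

/-- `K₁((α,β),(σ,γ)) = L(αβ)* L(σγ)`. -/
def K1 {n : ℕ} (L : Wd n → (H →L[ℂ] H)) (x y : Wd n × Wd n) : H →L[ℂ] H :=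
  adjoint (L (x.1 ++ x.2)) * L (y.1 ++ y.2)

/-- `K₂((α,β),(σ,γ)) = L(β)* L((σ∖α)γ)` if `α ≤ σ`, `L((α∖σ)β)* L(γ)` if `σ < α`,
and `0` otherwise. -/
def K2 {n : ℕ} (L : Wd n → (H →L[ℂ] H)) (x y : Wd n × Wd n) : H →L[ℂ] H :=
  if pfx x.1 y.1 then adjoint (L x.2) * L (wq y.1 x.1 ++ y.2)
  else if pfx y.1 x.1 then adjoint (L (wq x.1 y.1 ++ x.2)) * L y.2
  else 0

/-!
If `T` is a row contraction with `T_σ L(g₀) = L(σ)`, admissibility gives `L(αβ) = T_α L(β)` on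
`Λ_Σ`, so `K₂ - K₁` is the congruence by `L(β)` of the kernel `(α, σ) ↦ K_T(α, σ) - T_α* T_σ`,
where `K_T` is the multi-Toeplitz kernel of `T`. That kernel is positive by induction on the
length of words, splitting them by their first letter: the terms involving the empty word cancel,
the blocks of words starting with the same letter are handled by induction, and what remains is
`‖∑ Tᵢ vᵢ‖² ≤ ∑ ‖vᵢ‖²`.

Conversely, positivity of `K₂ - K₁` at the points `(gᵢ, σ)` says
`‖∑ L(gᵢσ) c_{iσ}‖² ≤ ∑ᵢ ‖∑_σ L(σ) c_{iσ}‖²`, so `(L(σ) h)ᵢ ↦ L(gᵢσ) h` extends to a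
contraction `R : Hⁿ → H`. The components `Tᵢ` of `R` form a row contraction with
`Tᵢ L(σ) = L(gᵢσ)`, which gives `T_σ L(g₀) = L(σ)` by induction on `σ`.
-/

set_option linter.unusedSectionVars false

theorem pfx_nil_left {n : ℕ} (σ : Wd n) : pfx [] σ := ⟨σ, rfl⟩

theorem pfx_nil_right_iff {n : ℕ} {α : Wd n} : pfx α [] ↔ α = [] :=
  ⟨fun ⟨_, h⟩ => (List.append_eq_nil_iff.mp h.symm).1, fun h => h ▸ pfx_nil_left []⟩

theorem pfx_cons_cons_iff {n : ℕ} {i j : Fin n} {α σ : Wd n} :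
    pfx (i :: α) (j :: σ) ↔ i = j ∧ pfx α σ := by
  simp only [pfx, List.cons_append, List.cons.injEq, eq_comm (a := j), exists_and_left]

theorem wq_append {n : ℕ} (α τ : Wd n) : wq (α ++ τ) α = τ := by
  simp [wq]

theorem wordOp_nil {n : ℕ} (T : Fin n → (H →L[ℂ] H)) : wordOp T [] = 1 := rfl

theorem wordOp_cons {n : ℕ} (T : Fin n → (H →L[ℂ] H)) (i : Fin n) (α : Wd n) :
    wordOp T (i :: α) = T i * wordOp T α := by
  simp [wordOp]

theorem wordOp_append {n : ℕ} (T : Fin n → (H →L[ℂ] H)) (α β : Wd n) :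
    wordOp T (α ++ β) = wordOp T α * wordOp T β := by
  simp [wordOp]

def toeplitzKernel {n : ℕ} (T : Fin n → (H →L[ℂ] H)) (α σ : Wd n) : H →L[ℂ] H :=
  if pfx α σ then wordOp T (wq σ α)
  else if pfx σ α then adjoint (wordOp T (wq α σ))
  else 0

section ToeplitzKernel

variable {n : ℕ} (T : Fin n → (H →L[ℂ] H))

theorem toeplitzKernel_nil_left (σ : Wd n) : toeplitzKernel T [] σ = wordOp T σ := by
  simp [toeplitzKernel, pfx_nil_left, wq]

theorem toeplitzKernel_nil_right (α : Wd n) :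
    toeplitzKernel T α [] = adjoint (wordOp T α) := by
  rcases eq_or_ne α [] with rfl | hα
  · rw [toeplitzKernel_nil_left, wordOp_nil, adjoint_one]
  · simp [toeplitzKernel, pfx_nil_right_iff, hα, pfx_nil_left, wq]

theorem toeplitzKernel_cons_cons (i j : Fin n) (α σ : Wd n) :
    toeplitzKernel T (i :: α) (j :: σ) = if i = j then toeplitzKernel T α σ else 0 := by
  rcases eq_or_ne i j with rfl | hij
  · simp [toeplitzKernel, pfx_cons_cons_iff, wq]
  · simp [toeplitzKernel, pfx_cons_cons_iff, hij, hij.symm]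

end ToeplitzKernel

section RowContraction

variable {n : ℕ} {T : Fin n → (H →L[ℂ] H)}

theorem rowContraction_iff_norm_adjoint_le :
    RowContraction T ↔ ∀ x : H, ‖WithLp.toLp 2 (fun i => adjoint (T i) x)‖ ≤ ‖x‖ := by
  have hre : ∀ x : H, ((1 : H →L[ℂ] H) - ∑ i, T i * adjoint (T i)).reApplyInnerSelf x
      = ‖x‖ ^ 2 - ‖WithLp.toLp 2 (fun i => adjoint (T i) x)‖ ^ 2 := by
    intro x
    simp only [reApplyInnerSelf_apply, sub_apply, one_apply_eq_self, sum_apply,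
      mul_apply_eq_comp, inner_sub_left, sum_inner, map_sub, map_sum,
      ← inner_self_eq_norm_sq (𝕜 := ℂ), PiLp.inner_apply]
    simp_rw [← adjoint_inner_right (T _)]
  have hsymm : ((1 : H →L[ℂ] H) - ∑ i, T i * adjoint (T i)).IsSymmetric := by
    rw [← isSelfAdjoint_iff_isSymmetric]
    simp [IsSelfAdjoint, star_sum, star_mul, star_eq_adjoint]
  simp only [RowContraction, isPositive_def, hsymm, true_and, hre, sub_nonneg]
  exact forall_congr' fun x => pow_le_pow_iff_left₀ (norm_nonneg _) (norm_nonneg _) two_ne_zero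

theorem inner_sum_apply_eq_inner_adjoint (x : H) (v : PiLp 2 (fun _ : Fin n => H)) :
    ⟪x, ∑ i, T i (v i)⟫_ℂ = ⟪WithLp.toLp 2 (fun i => adjoint (T i) x), v⟫_ℂ := by
  simp [PiLp.inner_apply, adjoint_inner_left]

theorem rowContraction_iff_norm_sum_apply_le :
    RowContraction T ↔ ∀ v : PiLp 2 (fun _ : Fin n => H), ‖∑ i, T i (v i)‖ ≤ ‖v‖ := by
  rw [rowContraction_iff_norm_adjoint_le]
  constructor
  · intro hT v
    set w := ∑ i, T i (v i)
    have : ‖w‖ ^ 2 ≤ ‖w‖ * ‖v‖ := by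
      calc ‖w‖ ^ 2 = RCLike.re ⟪w, w⟫_ℂ := (inner_self_eq_norm_sq w).symm
        _ = RCLike.re ⟪WithLp.toLp 2 (fun i => adjoint (T i) w), v⟫_ℂ := by rw [inner_sum_apply_eq_inner_adjoint]
        _ ≤ ‖WithLp.toLp 2 (fun i => adjoint (T i) w)‖ * ‖v‖ := re_inner_le_norm _ _
        _ ≤ ‖w‖ * ‖v‖ := by gcongr; exact hT w
    nlinarith [norm_nonneg w, norm_nonneg v]
  · intro hT x
    set c := WithLp.toLp 2 (fun i => adjoint (T i) x)
    have : ‖c‖ ^ 2 ≤ ‖c‖ * ‖x‖ := by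
      calc ‖c‖ ^ 2 = RCLike.re ⟪c, c⟫_ℂ := (inner_self_eq_norm_sq c).symm
        _ = RCLike.re ⟪x, ∑ i, T i (c i)⟫_ℂ := by rw [inner_sum_apply_eq_inner_adjoint]
        _ ≤ ‖x‖ * ‖∑ i, T i (c i)‖ := re_inner_le_norm _ _
        _ ≤ ‖c‖ * ‖x‖ := by rw [mul_comm]; gcongr; exact hT c
    nlinarith [norm_nonneg c, norm_nonneg x]

end RowContraction

theorem sum_sum_inner {𝕜 X E : Type*} [RCLike 𝕜] [NormedAddCommGroup E] [InnerProductSpace 𝕜 E]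
    (s : Finset X) (a : X → E) :
    ∑ x ∈ s, ∑ y ∈ s, ⟪a x, a y⟫_𝕜 = ⟪∑ x ∈ s, a x, ∑ y ∈ s, a y⟫_𝕜 := by
  rw [sum_inner]
  simp only [inner_sum]

theorem inner_self_le_inner_self_iff {E F : Type*} [NormedAddCommGroup E] [InnerProductSpace ℂ E]
    [NormedAddCommGroup F] [InnerProductSpace ℂ F] {u : E} {w : F} :
    ⟪u, u⟫_ℂ ≤ ⟪w, w⟫_ℂ ↔ ‖u‖ ≤ ‖w‖ := by
  rw [inner_self_eq_norm_sq_to_K, inner_self_eq_norm_sq_to_K]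
  norm_cast
  exact pow_le_pow_iff_left₀ (norm_nonneg _) (norm_nonneg _) two_ne_zero

theorem KerPSD.comp {X Y : Type*} {K : Y → Y → (H →L[ℂ] H)} (hK : KerPSD K) {p : X → Y}
    (hp : Function.Injective p) : KerPSD fun a b => K (p a) (p b) := by
  intro s h
  have := hK (s.map ⟨p, hp⟩) (Function.extend p h 0)
  simpa only [Finset.sum_map, Function.Embedding.coeFn_mk, hp.extend_apply] using this

theorem KerPSD.conj {X : Type*} {K : X → X → (H →L[ℂ] H)} (hK : KerPSD K)
    (A : X → (H →L[ℂ] H)) : KerPSD fun x y => adjoint (A x) * K x y * A y := by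
  intro s h
  simpa only [mul_apply_eq_comp, adjoint_inner_right] using hK s fun x => A x (h x)

section Toeplitz

variable {n : ℕ} {X : Type*} (T : Fin n → (H →L[ℂ] H)) (s : Finset X) (f : X → Wd n)
  (k : X → H)

theorem sum_eq_sum_nil_add_sum_head {M : Type*} [AddCommMonoid M] (F : X → M) :
    ∑ x ∈ s, F x =
      ∑ x ∈ s with f x = [], F x + ∑ i, ∑ x ∈ s with (f x).head? = some i, F x := by
  rw [← Finset.sum_fiberwise s (fun x => (f x).head?) F, Fintype.sum_option]
  simp only [List.head?_eq_none_iff]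

theorem sum_inner_toeplitzKernel_of_eq_nil {x : X} (hx : f x = []) :
    ∑ y ∈ s, ⟪k x, toeplitzKernel T (f x) (f y) (k y)⟫_ℂ =
      ⟪k x, ∑ y ∈ s, wordOp T (f y) (k y)⟫_ℂ := by
  simp [hx, toeplitzKernel_nil_left]

theorem sum_inner_toeplitzKernel_of_eq_cons {x : X} {i : Fin n} {α : Wd n}
    (hx : f x = i :: α) :
    ∑ y ∈ s, ⟪k x, toeplitzKernel T (f x) (f y) (k y)⟫_ℂ =
      ⟪wordOp T (f x) (k x), ∑ y ∈ s with f y = [], k y⟫_ℂ +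
        ∑ y ∈ s with (f y).head? = some i, ⟪k x, toeplitzKernel T α (f y).tail (k y)⟫_ℂ := by
  rw [sum_eq_sum_nil_add_sum_head s f, inner_sum]
  congr 1
  · refine Finset.sum_congr rfl fun y hy => ?_
    rw [(Finset.mem_filter.mp hy).2, toeplitzKernel_nil_right, adjoint_inner_right]
  · rw [Finset.sum_eq_single i]
    · refine Finset.sum_congr rfl fun y hy => ?_
      rw [hx, List.eq_cons_of_mem_head? (Finset.mem_filter.mp hy).2, toeplitzKernel_cons_cons,
        if_pos rfl, List.tail_cons]
    · intro j _ hji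
      refine Finset.sum_eq_zero fun y hy => ?_
      rw [hx, List.eq_cons_of_mem_head? (Finset.mem_filter.mp hy).2, toeplitzKernel_cons_cons,
        if_neg hji.symm, zero_apply, inner_zero_right]
    · simp

theorem sum_sum_head_wordOp_apply :
    ∑ i, ∑ x ∈ s with (f x).head? = some i, wordOp T (f x) (k x) =
      ∑ i, T i (∑ x ∈ s with (f x).head? = some i, wordOp T (f x).tail (k x)) := by
  refine Finset.sum_congr rfl fun i _ => ?_
  rw [map_sum]
  refine Finset.sum_congr rfl fun x hx => ?_
  rw [List.eq_cons_of_mem_head? (Finset.mem_filter.mp hx).2, wordOp_cons, mul_apply_eq_comp,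
    List.tail_cons]

theorem sum_wordOp_apply_eq :
    ∑ x ∈ s, wordOp T (f x) (k x) = ∑ x ∈ s with f x = [], k x +
      ∑ i, T i (∑ x ∈ s with (f x).head? = some i, wordOp T (f x).tail (k x)) := by
  rw [sum_eq_sum_nil_add_sum_head s f, sum_sum_head_wordOp_apply]
  congr 1
  refine Finset.sum_congr rfl fun x hx => ?_
  rw [(Finset.mem_filter.mp hx).2, wordOp_nil, one_apply_eq_self]

theorem sum_sum_inner_toeplitzKernel_eq :
    ∑ x ∈ s, ∑ y ∈ s, ⟪k x, toeplitzKernel T (f x) (f y) (k y)⟫_ℂ =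
      ⟪∑ x ∈ s with f x = [], k x, ∑ x ∈ s, wordOp T (f x) (k x)⟫_ℂ +
      ⟪∑ i, T i (∑ x ∈ s with (f x).head? = some i, wordOp T (f x).tail (k x)),
        ∑ x ∈ s with f x = [], k x⟫_ℂ +
      ∑ i, ∑ x ∈ s with (f x).head? = some i, ∑ y ∈ s with (f y).head? = some i,
        ⟪k x, toeplitzKernel T (f x).tail (f y).tail (k y)⟫_ℂ := by
  rw [sum_eq_sum_nil_add_sum_head s f, add_assoc, sum_inner, ← sum_sum_head_wordOp_apply]
  congr 1
  · exact Finset.sum_congr rfl fun x hx =>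
      sum_inner_toeplitzKernel_of_eq_nil T s f k (Finset.mem_filter.mp hx).2
  · rw [sum_inner, ← Finset.sum_add_distrib]
    refine Finset.sum_congr rfl fun i _ => ?_
    rw [sum_inner, ← Finset.sum_add_distrib]
    exact Finset.sum_congr rfl fun x hx => sum_inner_toeplitzKernel_of_eq_cons T s f k
      (List.eq_cons_of_mem_head? (Finset.mem_filter.mp hx).2)

theorem inner_sum_wordOp_le_of_length_le (hT : RowContraction T) (N : ℕ)
    (hN : ∀ x ∈ s, (f x).length ≤ N) :
    ⟪∑ x ∈ s, wordOp T (f x) (k x), ∑ x ∈ s, wordOp T (f x) (k x)⟫_ℂ ≤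
      ∑ x ∈ s, ∑ y ∈ s, ⟪k x, toeplitzKernel T (f x) (f y) (k y)⟫_ℂ := by
  induction N generalizing s f with
  | zero =>
    have hnil : ∀ x ∈ s, f x = [] := fun x hx => List.eq_nil_of_length_eq_zero (by grind)
    refine le_of_eq ?_
    rw [← sum_sum_inner]
    refine Finset.sum_congr rfl fun x hx => Finset.sum_congr rfl fun y hy => ?_
    rw [hnil x hx, hnil y hy, toeplitzKernel_nil_left, wordOp_nil, one_apply_eq_self]
  | succ N ih =>
    rw [sum_sum_inner_toeplitzKernel_eq]
    set s' : Fin n → Finset X := fun i => {x ∈ s | (f x).head? = some i}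
    set v : Fin n → H := fun i => ∑ x ∈ s' i, wordOp T (f x).tail (k x)
    set h₀ := ∑ x ∈ s with f x = [], k x
    set u := ∑ i, T i (v i)
    set w := ∑ x ∈ s, wordOp T (f x) (k x) with hw
    have hu : ⟪u, u⟫_ℂ ≤ ∑ i, ⟪v i, v i⟫_ℂ := by
      have := (rowContraction_iff_norm_sum_apply_le.mp hT) (WithLp.toLp 2 v)
      rwa [← inner_self_le_inner_self_iff, PiLp.inner_apply] at this
    have hv (i : Fin n) : ⟪v i, v i⟫_ℂ ≤ ∑ x ∈ s' i, ∑ y ∈ s' i,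
        ⟪k x, toeplitzKernel T (f x).tail (f y).tail (k y)⟫_ℂ :=
      ih (s' i) (fun x => (f x).tail) fun x hx => by
        have := hN x (Finset.mem_filter.mp hx).1
        rw [List.eq_cons_of_mem_head? (Finset.mem_filter.mp hx).2] at this
        simpa using this
    calc ⟪w, w⟫_ℂ = ⟪h₀, w⟫_ℂ + ⟪u, h₀⟫_ℂ + ⟪u, u⟫_ℂ := by
          rw [hw, sum_wordOp_apply_eq]
          simp only [inner_add_left, inner_add_right]
          ring
      _ ≤ _ := add_le_add le_rfl (hu.trans (Finset.sum_le_sum fun i _ => hv i))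

end Toeplitz

theorem kerPSD_toeplitzKernel_sub {n : ℕ} {X : Type*} {T : Fin n → (H →L[ℂ] H)}
    (hT : RowContraction T) (f : X → Wd n) :
    KerPSD fun x y => toeplitzKernel T (f x) (f y) - adjoint (wordOp T (f x)) * wordOp T (f y) := by
  intro s k
  simp only [sub_apply, inner_sub_right, Finset.sum_sub_distrib, mul_apply_eq_comp,
    adjoint_inner_right, sum_sum_inner, sub_nonneg]
  exact inner_sum_wordOp_le_of_length_le T s f k hT _ fun x hx =>
    Finset.le_sup (f := fun x => (f x).length) hx

section Moment

variable {n : ℕ} {S : Set (Wd n)} {L : Wd n → (H →L[ℂ] H)} {T : Fin n → (H →L[ℂ] H)}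

theorem moment_append (hadm : Adm S) (hL : ∀ σ ∈ S, wordOp T σ * L [] = L σ) {α β : Wd n}
    (h : α ++ β ∈ S) : L (α ++ β) = wordOp T α * L β := by
  rw [← hL _ h, ← hL _ (hadm α β h), wordOp_append, mul_assoc]

theorem K1_eq_of_moment (hadm : Adm S) (hL : ∀ σ ∈ S, wordOp T σ * L [] = L σ)
    {x y : Wd n × Wd n} (hx : x.1 ++ x.2 ∈ S) (hy : y.1 ++ y.2 ∈ S) :
    K1 L x y = adjoint (L x.2) * (adjoint (wordOp T x.1) * wordOp T y.1) * L y.2 := by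
  rw [K1, moment_append hadm hL hx, moment_append hadm hL hy, ← star_eq_adjoint, star_mul]
  simp only [star_eq_adjoint, mul_assoc]

theorem K2_eq_of_moment (hadm : Adm S) (hL : ∀ σ ∈ S, wordOp T σ * L [] = L σ)
    {x y : Wd n × Wd n} (hx : x.1 ++ x.2 ∈ S) (hy : y.1 ++ y.2 ∈ S) :
    K2 L x y = adjoint (L x.2) * toeplitzKernel T x.1 y.1 * L y.2 := by
  obtain ⟨α, β⟩ := x
  obtain ⟨σ, γ⟩ := y
  unfold K2 toeplitzKernel
  split_ifs with hασ hσα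
  · obtain ⟨τ, rfl⟩ := hασ
    rw [wq_append, moment_append hadm hL (hadm α _ (List.append_assoc α τ γ ▸ hy)), mul_assoc]
  · obtain ⟨τ, rfl⟩ := hσα
    rw [wq_append, moment_append hadm hL (hadm σ _ (List.append_assoc σ τ β ▸ hx)),
      ← star_eq_adjoint, star_mul, star_eq_adjoint, star_eq_adjoint]
  · simp

theorem kerPSD_of_moment (hadm : Adm S) (hT : RowContraction T)
    (hL : ∀ σ ∈ S, wordOp T σ * L [] = L σ) :
    KerPSD fun x y : {p : Wd n × Wd n // p.1 ++ p.2 ∈ S} => K2 L x.1 y.1 - K1 L x.1 y.1 := by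
  have hK : (fun x y : {p : Wd n × Wd n // p.1 ++ p.2 ∈ S} => K2 L x.1 y.1 - K1 L x.1 y.1) =
      fun x y => adjoint (L x.1.2) * (toeplitzKernel T x.1.1 y.1.1 -
        adjoint (wordOp T x.1.1) * wordOp T y.1.1) * L y.1.2 := by
    funext x y
    rw [K2_eq_of_moment hadm hL x.2 y.2, K1_eq_of_moment hadm hL x.2 y.2, mul_sub, sub_mul]
  rw [hK]
  exact (kerPSD_toeplitzKernel_sub hT fun x : {p : Wd n × Wd n // p.1 ++ p.2 ∈ S} => x.1.1).conj
    fun x => L x.1.2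

end Moment

theorem LinearMap.exists_contraction_comp_eq {𝕜 V E F : Type*} [RCLike 𝕜]
    [AddCommGroup V] [Module 𝕜 V] [NormedAddCommGroup E] [InnerProductSpace 𝕜 E]
    [CompleteSpace E] [NormedAddCommGroup F] [NormedSpace 𝕜 F] [CompleteSpace F]
    (U : V →ₗ[𝕜] E) (W : V →ₗ[𝕜] F) (h : ∀ v, ‖W v‖ ≤ ‖U v‖) :
    ∃ R : E →L[𝕜] F, (∀ x, ‖R x‖ ≤ ‖x‖) ∧ ∀ v, R (U v) = W v := by
  let K := (LinearMap.range U).topologicalClosure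
  let e : V →ₗ[𝕜] K :=
    U.codRestrict K fun v => Submodule.le_topologicalClosure _ (LinearMap.mem_range_self U v)
  have he : DenseRange e := by
    rw [DenseRange, Topology.IsInducing.subtypeVal.dense_iff]
    rintro ⟨x, hx⟩
    rw [← Set.range_comp]
    change x ∈ closure (Set.range U)
    rwa [← LinearMap.coe_range, ← Submodule.topologicalClosure_coe]
  have hWe : ∀ v, ‖W v‖ ≤ 1 * ‖e v‖ := fun v => (one_mul ‖e v‖).symm ▸ h v
  refine ⟨(W.extendOfNorm e).comp K.orthogonalProjectionOnto, fun x => ?_, fun v => ?_⟩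
  · calc ‖W.extendOfNorm e (K.orthogonalProjectionOnto x)‖
        ≤ 1 * ‖K.orthogonalProjectionOnto x‖ := W.norm_extendOfNorm_apply_le he 1 hWe _
      _ ≤ 1 * ‖x‖ := by
        gcongr
        simpa using K.orthogonalProjectionOnto.le_of_opNorm_le K.orthogonalProjectionOnto_norm_le x
      _ = ‖x‖ := one_mul _
  · rw [ContinuousLinearMap.comp_apply,
      show K.orthogonalProjectionOnto (U v) = e v from
        K.orthogonalProjectionOnto_mem_subspace_eq_self (e v),
      LinearMap.extendOfNorm_eq he ⟨1, hWe⟩]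

section PiLpSingle

variable {n : ℕ}

def piLpSingleL (i : Fin n) : H →L[ℂ] PiLp 2 (fun _ : Fin n => H) :=
  (PiLp.continuousLinearEquiv 2 ℂ (fun _ : Fin n => H)).symm.toContinuousLinearMap ∘L
    ContinuousLinearMap.single ℂ (fun _ : Fin n => H) i

theorem inner_piLpSingleL (i j : Fin n) (a b : H) :
    ⟪piLpSingleL i a, piLpSingleL j b⟫_ℂ = if i = j then ⟪a, b⟫_ℂ else 0 := by
  rw [PiLp.inner_apply, Finset.sum_eq_single i]
  · by_cases hij : i = j
    · subst hij; simp [piLpSingleL]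
    · simp [piLpSingleL, hij]
  · intro x _ hxi
    simp [piLpSingleL, hxi]
  · simp

theorem sum_piLpSingleL (v : PiLp 2 (fun _ : Fin n => H)) : ∑ i, piLpSingleL i (v i) = v := by
  ext j
  simp [piLpSingleL, Pi.single_apply]

end PiLpSingle

section Reverse

variable {n : ℕ} (S : Set (Wd n)) (L : Wd n → (H →L[ℂ] H))

abbrev ConsIdx := Σ i : Fin n, {σ : Wd n // i :: σ ∈ S}

def consPoint (q : ConsIdx S) : {p : Wd n × Wd n // p.1 ++ p.2 ∈ S} :=
  ⟨([q.1], q.2.1), q.2.2⟩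

theorem consPoint_injective : Function.Injective (consPoint S) := by
  rintro ⟨i, σ, hσ⟩ ⟨j, τ, hτ⟩ h
  simp only [consPoint, Subtype.mk.injEq, Prod.mk.injEq, List.cons.injEq, and_true] at h
  obtain ⟨rfl, rfl⟩ := h
  rfl

-- For `c = (c_{iσ})`, `tailMap c = (∑_σ L(σ) c_{iσ})ᵢ ∈ Hⁿ` and `wordMap c = ∑ L(gᵢσ) c_{iσ}`;
-- on the points `(gᵢ, σ)` of `Λ_Σ`, `K₂` is the Gram kernel of the first and `K₁` of the second.
def tailMap : (ConsIdx S →₀ H) →ₗ[ℂ] PiLp 2 (fun _ : Fin n => H) :=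
  Finsupp.lsum ℂ fun q => (piLpSingleL q.1 ∘L L q.2.1).toLinearMap

def wordMap : (ConsIdx S →₀ H) →ₗ[ℂ] H :=
  Finsupp.lsum ℂ fun q => (L (q.1 :: q.2.1)).toLinearMap

theorem K2_singleton_singleton (i j : Fin n) (σ τ : Wd n) :
    K2 L ([i], σ) ([j], τ) = if i = j then adjoint (L σ) * L τ else 0 := by
  have hpfx : ∀ i j : Fin n, pfx [i] [j] ↔ i = j := fun i j => by
    simp [pfx_cons_cons_iff, pfx_nil_left]
  rcases eq_or_ne i j with rfl | hij
  · simp [K2, hpfx, wq]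
  · simp [K2, hpfx, hij, hij.symm]

variable {S L}

theorem norm_wordMap_le
    (hK : KerPSD fun x y : {p : Wd n × Wd n // p.1 ++ p.2 ∈ S} => K2 L x.1 y.1 - K1 L x.1 y.1)
    (c : ConsIdx S →₀ H) : ‖wordMap S L c‖ ≤ ‖tailMap S L c‖ := by
  have hterm : ∀ q q' : ConsIdx S,
      ⟪c q, (K2 L (consPoint S q).1 (consPoint S q').1 -
        K1 L (consPoint S q).1 (consPoint S q').1) (c q')⟫_ℂ =
      ⟪piLpSingleL q.1 (L q.2.1 (c q)), piLpSingleL q'.1 (L q'.2.1 (c q'))⟫_ℂ -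
        ⟪L (q.1 :: q.2.1) (c q), L (q'.1 :: q'.2.1) (c q')⟫_ℂ := by
    intro q q'
    rw [sub_apply, inner_sub_right, inner_piLpSingleL]
    congr 1
    · simp only [consPoint, K2_singleton_singleton]
      split_ifs <;> simp [adjoint_inner_right]
    · simp only [consPoint, K1, mul_apply_eq_comp, adjoint_inner_right]
      rfl
  have := (hK.comp (consPoint_injective S)) c.support c
  simp only [hterm, Finset.sum_sub_distrib, sum_sum_inner, sub_nonneg,
    inner_self_le_inner_self_iff] at this
  exact this

theorem exists_rowContraction_of_kerPSD (hadm : Adm S)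
    (hK : KerPSD fun x y : {p : Wd n × Wd n // p.1 ++ p.2 ∈ S} => K2 L x.1 y.1 - K1 L x.1 y.1) :
    ∃ T : Fin n → (H →L[ℂ] H), RowContraction T ∧ ∀ σ ∈ S, wordOp T σ * L [] = L σ := by
  obtain ⟨R, hR, hRU⟩ :=
    (tailMap S L).exists_contraction_comp_eq (wordMap S L) (norm_wordMap_le hK)
  have hstep (i : Fin n) (σ : Wd n) (h : i :: σ ∈ S) (a : H) :
      R (piLpSingleL i (L σ a)) = L (i :: σ) a := by
    simpa [tailMap, wordMap] using hRU (Finsupp.single ⟨i, σ, h⟩ a)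
  refine ⟨fun i => R ∘L piLpSingleL i, ?_, ?_⟩
  · refine rowContraction_iff_norm_sum_apply_le.mpr fun v => ?_
    simpa only [comp_apply, ← map_sum, sum_piLpSingleL] using hR v
  · intro σ
    induction σ with
    | nil => exact fun _ => one_mul _
    | cons i σ ih =>
      intro h
      rw [wordOp_cons, mul_assoc, ih (hadm [i] σ h)]
      ext a
      exact hstep i σ h a

end Reverse

theorem stmt0_general {n : ℕ} (S : Set (Wd n)) (hadm : Adm S)
    (L : Wd n → (H →L[ℂ] H)) :
    (∃ T : Fin n → (H →L[ℂ] H), RowContraction T ∧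
        ∀ σ ∈ S, wordOp T σ * L ([] : Wd n) = L σ) ↔
      KerPSD (fun x y : {p : Wd n × Wd n // p.1 ++ p.2 ∈ S} =>
        K2 L x.1 y.1 - K1 L x.1 y.1) :=
  ⟨fun ⟨_, hT, hL⟩ => kerPSD_of_moment hadm hT hL, exists_rowContraction_of_kerPSD hadm⟩

/-- `L : Σ → B(H)` is a moment map for Poisson transforms on
`C*(S₁,…,Sₙ)` (equivalently: there is a row contraction `T` with `T_σ L(g₀) = L(σ)`
for all `σ ∈ Σ`) iff `K₁ ≤ K₂` as kernels on `Λ_Σ`. -/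
theorem stmt0 {n : ℕ} (hn : 0 < n) (S : Set (Wd n)) (hne : S.Nonempty) (hadm : Adm S)
    (L : Wd n → (H →L[ℂ] H)) :
    (∃ T : Fin n → (H →L[ℂ] H), RowContraction T ∧
        ∀ σ ∈ S, wordOp T σ * L ([] : Wd n) = L σ) ↔
      KerPSD (fun x y : {p : Wd n × Wd n // p.1 ++ p.2 ∈ S} =>
        K2 L x.1 y.1 - K1 L x.1 y.1) :=
  stmt0_general S hadm L

end
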